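/- arXiv:1211.2147 — 5 statements merged into one kernel-verified Lean document; each statement's English description precedes it below -/
import Mathlib

section
/- If n and n' are consecutive superabundant numbers (n < n', no superabundant number strictly between), then n' ≤ 2n. -/
open Real Finset

noncomputable section

/-- Sum of divisors of `n`. -/
def sigma1 (n : ℕ) : ℕ := n.divisors.sum id

/-- `n` is superabundant if `σ(n)/n > σ(m)/m` for all positive `m < n`. -/
def Superabundant (n : ℕ) : Prop :=
  0 < n ∧ ∀ m : ℕ, 0 < m → m < n → (sigma1 m : ℝ) / m < (sigma1 n : ℝ) / n

/-- Robin's quotient `f(n) = σ(n)/(n log log n)`. -/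
def robinF (n : ℕ) : ℝ := (sigma1 n : ℝ) / (n * Real.log (Real.log n))

/-- `n` is extremely abundant. -/
def ExtremelyAbundant (n : ℕ) : Prop :=
  n = 10080 ∨ (10080 < n ∧ ∀ m : ℕ, 10080 ≤ m → m < n → robinF m < robinF n)
lemma sigma_two_mul (n : ℕ) (hn : 0 < n) : 2 * sigma1 n < sigma1 (2 * n) := by
  classical
  have hinj : Set.InjOn (fun d : ℕ => 2 * d) n.divisors := by
    intro a _ b _ h; simp only at h; omega
  have h3 : (1 : ℕ) ∉ (n.divisors).image (fun d => 2 * d) := by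
    simp only [Finset.mem_image, Nat.mem_divisors]
    rintro ⟨d, _, h⟩; omega
  have h1 : insert 1 ((n.divisors).image (fun d => 2 * d)) ⊆ (2 * n).divisors := by
    intro x hx
    simp only [Finset.mem_insert, Finset.mem_image, Nat.mem_divisors] at hx ⊢
    rcases hx with rfl | ⟨d, hd, rfl⟩
    · exact ⟨one_dvd _, by omega⟩
    · exact ⟨mul_dvd_mul_left 2 hd.1, by omega⟩
  have h2 : ((insert 1 ((n.divisors).image (fun d => 2 * d))).sum id) ≤ sigma1 (2 * n) :=
    Finset.sum_le_sum_of_subset h1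
  rw [Finset.sum_insert h3, Finset.sum_image (fun a ha b hb h => hinj ha hb h)] at h2
  simp only [id] at h2
  have h4 : (n.divisors).sum (fun d => 2 * d) = 2 * sigma1 n := by
    simp [sigma1, Finset.mul_sum]
  omega


lemma ratio_two_mul (n : ℕ) (hn : 0 < n) :
    (sigma1 n : ℝ) / n < (sigma1 (2 * n) : ℝ) / (2 * n) := by
  have h := sigma_two_mul n hn
  have hn' : (0 : ℝ) < n := by exact_mod_cast hn
  rw [div_lt_div_iff₀ hn' (by positivity)]
  have hR : (2:ℝ) * (sigma1 n : ℝ) < (sigma1 (2 * n) : ℝ) := by exact_mod_cast h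
  nlinarith [hR, hn']

theorem consecutive_superabundant_ratio_le_two
    (n n' : ℕ) (hn : Superabundant n) (hn' : Superabundant n') (hlt : n < n')
    (hcons : ∀ m : ℕ, n < m → m < n' → ¬ Superabundant m) :
    n' ≤ 2 * n := by
  classical
  obtain ⟨hn0, hmax⟩ := hn
  set S : Finset ℕ := (Finset.Ioc n (2 * n)).filter
    (fun m => (sigma1 n : ℝ) / n < (sigma1 m : ℝ) / m) with hS
  have hmem : 2 * n ∈ S := by
    simp only [hS, Finset.mem_filter, Finset.mem_Ioc]
    refine ⟨⟨by omega, le_refl _⟩, ?_⟩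
    push_cast
    exact ratio_two_mul n hn0
  have hne : S.Nonempty := ⟨2 * n, hmem⟩
  set m := S.min' hne with hm
  have hmS : m ∈ S := S.min'_mem hne
  simp only [hS, Finset.mem_filter, Finset.mem_Ioc] at hmS
  obtain ⟨⟨hnm, hm2n⟩, hratio⟩ := hmS
  have hsab : Superabundant m := by
    refine ⟨by omega, fun k hk0 hkm => ?_⟩
    rcases lt_trichotomy k n with hkn | rfl | hkn
    · exact (hmax k hk0 hkn).trans hratio
    · exact hratio
    · by_contra hcon
      push_neg at hcon
      have hkS : k ∈ S := by
        simp only [hS, Finset.mem_filter, Finset.mem_Ioc]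
        refine ⟨⟨hkn, by omega⟩, ?_⟩
        rcases lt_or_ge ((sigma1 n : ℝ) / n) ((sigma1 k : ℝ) / k) with h | h
        · exact h
        · exact absurd (h.trans_lt hratio) (not_lt.mpr hcon)
      exact absurd (S.min'_le k hkS) (by omega)
  have : ¬ m < n' := fun h => hcons m hnm h hsab
  omega
end
end

section
/- For every real x ≥ 1 there is at least one superabundant number in the interval [x, 2x). -/
open Real Finset

noncomputable section

/-!
Doubling raises the abundancy `σ(n)/n`: `2σ(n) < σ(2n)`, since the divisors of `2n` contain `1`
and the doubles of the divisors of `n`. So after a superabundant `n`, the first `m > n` whose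
abundancy exceeds that of `n` is superabundant and at most `2n`. The largest superabundant number
below `2x` therefore lies in `[x, 2x)`.
-/

def abundancy (n : ℕ) : ℝ := (sigma1 n : ℝ) / n

lemma mul_sigma1_lt_sigma1_mul {k n : ℕ} (hk : 1 < k) (hn : 0 < n) :
    k * sigma1 n < sigma1 (k * n) := by
  have one_notMem : 1 ∉ n.divisors.image (k * ·) := by
    simp only [mem_image, not_exists, not_and]
    intro d hd hkd
    have : 0 < d := Nat.pos_of_mem_divisors hd
    nlinarith
  have subset : insert 1 (n.divisors.image (k * ·)) ⊆ (k * n).divisors := by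
    intro d hd
    rcases mem_insert.1 hd with rfl | hd
    · exact Nat.one_mem_divisors.2 (by positivity)
    · obtain ⟨e, he, rfl⟩ := mem_image.1 hd
      exact Nat.mem_divisors.2 ⟨mul_dvd_mul_left k (Nat.dvd_of_mem_divisors he), by positivity⟩
  calc k * sigma1 n < (insert 1 (n.divisors.image (k * ·))).sum id := by
        rw [sum_insert one_notMem, sum_image fun a _ b _ h => Nat.eq_of_mul_eq_mul_left (by omega) h,
          sigma1, mul_sum]
        simp
    _ ≤ sigma1 (k * n) := sum_le_sum_of_subset subset

lemma abundancy_lt_abundancy_mul {k n : ℕ} (hk : 1 < k) (hn : 0 < n) :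
    abundancy n < abundancy (k * n) := by
  have h : (k * sigma1 n : ℝ) < sigma1 (k * n) := by exact_mod_cast mul_sigma1_lt_sigma1_mul hk hn
  have hn' : (0 : ℝ) < n := by exact_mod_cast hn
  have hk' : (0 : ℝ) < k := by exact_mod_cast (by omega : 0 < k)
  rw [abundancy, abundancy, div_lt_div_iff₀ hn' (by push_cast; positivity)]
  push_cast
  nlinarith

lemma superabundant_one : Superabundant 1 := ⟨one_pos, fun _ hm hlt => by omega⟩

lemma Superabundant.exists_gt_le_two_mul {n : ℕ} (hn : Superabundant n) :
    ∃ m, Superabundant m ∧ n < m ∧ m ≤ 2 * n := by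
  classical
  have hdouble : n < 2 * n ∧ abundancy n < abundancy (2 * n) :=
    ⟨by linarith [hn.1], abundancy_lt_abundancy_mul one_lt_two hn.1⟩
  have hP : ∃ m, n < m ∧ abundancy n < abundancy m := ⟨2 * n, hdouble⟩
  obtain ⟨hnm, hab⟩ := Nat.find_spec hP
  refine ⟨Nat.find hP, ⟨hn.1.trans hnm, fun k hk hkm => ?_⟩, hnm, Nat.find_min' hP hdouble⟩
  change abundancy k < abundancy (Nat.find hP)
  rcases lt_trichotomy k n with h | rfl | h
  · exact (hn.2 k hk h).trans hab
  · exact hab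
  · exact (not_lt.1 fun h' => Nat.find_min hP hkm ⟨h, h'⟩).trans_lt hab

lemma exists_mem_Ico_two_mul_of_exists_gt_le_two_mul {S : ℕ → Prop} (h1 : S 1)
    (hstep : ∀ n, S n → ∃ m, S m ∧ n < m ∧ m ≤ 2 * n) {x : ℝ} (hx : 1 ≤ x) :
    ∃ n : ℕ, S n ∧ x ≤ n ∧ (n : ℝ) < 2 * x := by
  classical
  let P : ℕ → Prop := fun k => S k ∧ (k : ℝ) < 2 * x
  have hb : 1 ≤ ⌈2 * x⌉₊ := Nat.one_le_iff_ne_zero.2 (by positivity)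
  set N := Nat.findGreatest P ⌈2 * x⌉₊
  obtain ⟨hS, hlt⟩ : P N := Nat.findGreatest_spec hb ⟨h1, by push_cast; linarith⟩
  refine ⟨N, hS, not_lt.1 fun hNx => ?_, hlt⟩
  obtain ⟨m, hSm, hNm, hm⟩ := hstep N hS
  have hm2x : (m : ℝ) < 2 * x := by
    have : (m : ℝ) ≤ 2 * N := by exact_mod_cast hm
    linarith
  exact Nat.findGreatest_is_greatest hNm (Nat.cast_le.1 (hm2x.le.trans (Nat.le_ceil _)))
    ⟨hSm, hm2x⟩

theorem superabundant_in_interval (x : ℝ) (hx : 1 ≤ x) :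
    ∃ n : ℕ, Superabundant n ∧ x ≤ (n : ℝ) ∧ (n : ℝ) < 2 * x :=
  exists_mem_Ico_two_mul_of_exists_gt_le_two_mul superabundant_one
    (fun _ hn => hn.exists_gt_le_two_mul) hx
end
end

section
/- Let n be a superabundant number and let p be the largest prime factor of n. Then for every prime q dividing n, the exponent k_q of q in n satisfies ⌊log p / log q⌋ ≤ k_q. -/
open Real Finset

noncomputable section

lemma sigma1_eq (n : ℕ) : sigma1 n = ∑ d ∈ n.divisors, d := rfl

lemma sigma1_mul {m n : ℕ} (h : m.Coprime n) :
    sigma1 (m * n) = sigma1 m * sigma1 n := by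
  simp only [sigma1_eq]; exact h.sum_divisors_mul

lemma sigma1_prime_pow {p i : ℕ} (hp : p.Prime) :
    sigma1 (p ^ i) = ∑ j ∈ Finset.range (i + 1), p ^ j := by
  rw [sigma1_eq, ← ArithmeticFunction.sigma_one_apply,
    ArithmeticFunction.sigma_one_apply_prime_pow hp]

lemma sigma1_pos {n : ℕ} (h : 0 < n) : 0 < sigma1 n := by
  have h1 : (1 : ℕ) ∈ n.divisors := Nat.one_mem_divisors.mpr h.ne'
  have := Finset.single_le_sum (f := id) (fun i _ => Nat.zero_le i) h1
  simpa [sigma1_eq] using lt_of_lt_of_le Nat.one_pos this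

lemma geom_double (q k : ℕ) :
    ∑ i ∈ range (2 * k + 2), q ^ i
      = (∑ i ∈ range (k + 1), q ^ i) * (q ^ (k + 1) + 1) := by
  have h : 2 * k + 2 = (k + 1) + (k + 1) := by ring
  rw [h, Finset.sum_range_add, mul_add, mul_one, Finset.sum_mul]
  have hBC : ∑ x ∈ range (k + 1), q ^ (k + 1 + x)
      = ∑ i ∈ range (k + 1), q ^ i * q ^ (k + 1) :=
    Finset.sum_congr rfl fun i _ => by rw [← pow_add, add_comm]
  rw [hBC, add_comm]

lemma geom_succ (p b : ℕ) :
    ∑ i ∈ range (b + 2), p ^ i = 1 + p * ∑ i ∈ range (b + 1), p ^ i := by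
  rw [Finset.sum_range_succ' (fun i => p ^ i) (b + 1)]
  rw [Finset.mul_sum]
  simp [pow_succ, mul_comm, add_comm]

set_option maxHeartbeats 1000000 in
theorem superabundant_exponent_lower_bound
    (n : ℕ) (hn : Superabundant n) (p : ℕ) (hp : p.Prime) (hpn : p ∣ n)
    (hmax : ∀ q : ℕ, q.Prime → q ∣ n → q ≤ p)
    (q : ℕ) (hq : q.Prime) (hqn : q ∣ n) :
    ⌊Real.log p / Real.log q⌋ ≤ (n.factorization q : ℤ) := by
  by_contra hcon
  push_neg at hcon
  set k := n.factorization q with hk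
  have hn0 : n ≠ 0 := hn.1.ne'
  have hk1 : 1 ≤ k := hq.factorization_pos_of_dvd hn0 hqn
  -- From the floor hypothesis, q^(k+1) ≤ p
  have hfloor : ((k : ℤ) + 1 : ℝ) ≤ Real.log p / Real.log q := by
    have h1 : (k : ℤ) + 1 ≤ ⌊Real.log p / Real.log q⌋ := hcon
    calc ((k : ℤ) + 1 : ℝ) ≤ (⌊Real.log p / Real.log q⌋ : ℝ) := by exact_mod_cast h1
      _ ≤ _ := Int.floor_le _
  have hlogq : 0 < Real.log q := Real.log_pos (by exact_mod_cast hq.one_lt)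
  have hqk1p : q ^ (k + 1) ≤ p := by
    have h2 : ((k : ℝ) + 1) * Real.log q ≤ Real.log p := by
      rw [← le_div_iff₀ hlogq]; exact_mod_cast hfloor
    have h3 : Real.log ((q : ℝ) ^ (k + 1)) ≤ Real.log p := by
      rw [Real.log_pow]; push_cast; linarith
    have h4 : ((q : ℝ) ^ (k + 1)) ≤ (p : ℝ) := by
      rw [← Real.log_le_log_iff (pow_pos (by exact_mod_cast hq.pos) _) (by exact_mod_cast hp.pos)] ; exact h3
    exact_mod_cast h4
  have hqp : q ≠ p := by
    intro h
    subst h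
    have : q ^ 2 ≤ q ^ (k + 1) := Nat.pow_le_pow_right hq.pos (by omega)
    have : q ^ 2 ≤ q := le_trans this hqk1p
    nlinarith [hq.two_le]
  have hqk1lt : q ^ (k + 1) < p := by
    rcases lt_or_eq_of_le hqk1p with h | h
    · exact h
    · exfalso
      have : q ∣ p := h ▸ dvd_pow_self q (by omega)
      exact hqp ((Nat.prime_dvd_prime_iff_eq hq hp).mp this)
  -- decompose n = p^a * q^k * r
  set a := n.factorization p with ha
  have ha1 : 1 ≤ a := hp.factorization_pos_of_dvd hn0 hpn
  obtain ⟨b, hb⟩ : ∃ b, a = b + 1 := ⟨a - 1, by omega⟩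
  set n1 := n / p ^ a with hn1
  have hdecomp1 : p ^ a * n1 = n := Nat.ordProj_mul_ordCompl_eq_self n p
  have hn10 : n1 ≠ 0 := by
    intro h; rw [h, mul_zero] at hdecomp1; exact hn0 hdecomp1.symm
  have hpn1 : ¬ p ∣ n1 := Nat.not_dvd_ordCompl hp hn0
  have hkn1 : n1.factorization q = k := by
    rw [hn1, ha, Nat.factorization_ordCompl n p, Finsupp.erase_ne hqp]
  set r := n1 / q ^ k with hr
  have hdecomp2 : q ^ k * r = n1 := by
    rw [hr, ← hkn1]; exact Nat.ordProj_mul_ordCompl_eq_self n1 q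
  have hr0 : r ≠ 0 := by
    intro h; rw [h, mul_zero] at hdecomp2; exact hn10 hdecomp2.symm
  have hqr : ¬ q ∣ r := by
    rw [hr, ← hkn1]; exact Nat.not_dvd_ordCompl hq hn10
  have hpr : ¬ p ∣ r := fun h => hpn1 (h.trans ⟨q ^ k, by rw [← hdecomp2]; ring⟩)
  -- the competitor m
  set m := q ^ (2 * k + 1) * (p ^ b * r) with hm
  have hq0 : 0 < q := hq.pos
  have hp0 : 0 < p := hp.pos
  have hr0' : 0 < r := Nat.pos_of_ne_zero hr0
  have hm0 : 0 < m := by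
    rw [hm]; exact Nat.mul_pos (pow_pos hq0 _) (Nat.mul_pos (pow_pos hp0 _) hr0')
  have hnform : n = p ^ (b + 1) * (q ^ k * r) := by
    rw [← hdecomp1, ← hdecomp2, hb]
  have hmn : m < n := by
    rw [hnform, hm]
    calc q ^ (2 * k + 1) * (p ^ b * r) = q ^ (k + 1) * (q ^ k * (p ^ b * r)) := by ring
      _ < p * (q ^ k * (p ^ b * r)) :=
          mul_lt_mul_of_pos_right hqk1lt
            (Nat.mul_pos (pow_pos hq0 _) (Nat.mul_pos (pow_pos hp0 _) hr0'))
      _ = p ^ (b + 1) * (q ^ k * r) := by ring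
  -- coprimality facts
  have hcop_qp : Nat.Coprime q p := (Nat.coprime_primes hq hp).mpr hqp
  have hcop_q_r : Nat.Coprime q r := (hq.coprime_iff_not_dvd).mpr hqr
  have hcop_p_r : Nat.Coprime p r := (hp.coprime_iff_not_dvd).mpr hpr
  -- sigma values
  have hsn : sigma1 n = sigma1 (p ^ (b + 1)) * (sigma1 (q ^ k) * sigma1 r) := by
    rw [hnform, sigma1_mul, sigma1_mul (Nat.Coprime.pow_left _ hcop_q_r)]
    exact Nat.Coprime.pow_left _ (Nat.Coprime.mul_right (Nat.Coprime.pow_right _ hcop_qp.symm) hcop_p_r)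
  have hsm : sigma1 m = sigma1 (q ^ (2 * k + 1)) * (sigma1 (p ^ b) * sigma1 r) := by
    rw [hm, sigma1_mul, sigma1_mul (Nat.Coprime.pow_left _ hcop_p_r)]
    exact Nat.Coprime.pow_left _ (Nat.Coprime.mul_right (Nat.Coprime.pow_right _ hcop_qp) hcop_q_r)
  -- key identities
  have hid1 : sigma1 (q ^ (2 * k + 1)) = sigma1 (q ^ k) * (q ^ (k + 1) + 1) := by
    rw [sigma1_prime_pow hq, sigma1_prime_pow hq]
    have : 2 * k + 1 + 1 = 2 * k + 2 := by ring
    rw [this, geom_double]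
  have hid2 : sigma1 (p ^ (b + 1)) = 1 + p * sigma1 (p ^ b) := by
    rw [sigma1_prime_pow hp, sigma1_prime_pow hp, geom_succ]
  -- the key nat inequality : sigma1 n * m < sigma1 m * n
  have hkey : sigma1 n * m < sigma1 m * n := by
    rw [hsn, hsm, hid1, hid2, hm, hnform]
    set S := sigma1 (q ^ k) with hS
    set Sp := sigma1 (p ^ b) with hSp
    set Sr := sigma1 r with hSr
    have hSpos : 0 < S := sigma1_pos (pow_pos hq0 _)
    have hSppos : 0 < Sp := sigma1_pos (pow_pos hp0 _)
    have hSrpos : 0 < Sr := sigma1_pos (Nat.pos_of_ne_zero hr0)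
    have hrpos : 0 < r := Nat.pos_of_ne_zero hr0
    have hcore : (1 + p * Sp) * q ^ (k + 1) < (q ^ (k + 1) + 1) * (Sp * p) := by
      nlinarith [hqk1lt, hSppos]
    calc (1 + p * Sp) * (S * Sr) * (q ^ (2 * k + 1) * (p ^ b * r))
        = (S * Sr * (q ^ k * (p ^ b * r))) * ((1 + p * Sp) * q ^ (k + 1)) := by ring
      _ < (S * Sr * (q ^ k * (p ^ b * r))) * ((q ^ (k + 1) + 1) * (Sp * p)) :=
          mul_lt_mul_of_pos_left hcore
            (Nat.mul_pos (Nat.mul_pos hSpos hSrpos)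
              (Nat.mul_pos (pow_pos hq0 _) (Nat.mul_pos (pow_pos hp0 _) hrpos)))
      _ = S * (q ^ (k + 1) + 1) * (Sp * Sr) * (p ^ (b + 1) * (q ^ k * r)) := by ring
  -- contradiction with superabundance
  have hlt := hn.2 m hm0 hmn
  have hmR : (0 : ℝ) < m := by exact_mod_cast hm0
  have hnR : (0 : ℝ) < n := by exact_mod_cast hn.1
  rw [div_lt_div_iff₀ hmR hnR] at hlt
  have : (sigma1 n : ℝ) * m < (sigma1 m : ℝ) * n := by exact_mod_cast hkey
  linarith
end
end

section
/- If n < n' are superabundant numbers with the largest prime factor of n' at least the largest prime factor of n, then σ(n)/φ(n) < σ(n')/φ(n'), where φ is Euler's totient and σ the sum-of-divisors function. (One may additionally assume every prime factor of n divides n'.) -/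
open Real Finset

noncomputable section

lemma totient_ratio_mono {a b : ℕ} (ha : 0 < a) (hb : 0 < b)
    (hsub : a.primeFactors ⊆ b.primeFactors) :
    (a : ℝ) / a.totient ≤ (b : ℝ) / b.totient := by
  have key : ∀ m : ℕ, 0 < m →
      (m : ℝ) / m.totient = (∏ p ∈ m.primeFactors, (1 - (p : ℝ)⁻¹))⁻¹ := by
    intro m hm
    have h := Nat.totient_eq_mul_prod_factors m
    have hR : (m.totient : ℝ) = m * ∏ p ∈ m.primeFactors, (1 - (p : ℝ)⁻¹) := by
      have := congrArg (fun q : ℚ => (q : ℝ)) h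
      push_cast at this
      exact this
    rw [hR]
    rw [div_mul_eq_div_div, div_self (by positivity : (m : ℝ) ≠ 0), one_div]
  have hpos : ∀ m : ℕ, ∀ p ∈ m.primeFactors, (0:ℝ) < 1 - (p : ℝ)⁻¹ := by
    intro m p hp
    have h2 : 2 ≤ p := (Nat.prime_of_mem_primeFactors hp).two_le
    have : (p:ℝ)⁻¹ < 1 := by
      rw [inv_lt_one_iff₀]; right; exact_mod_cast lt_of_lt_of_le one_lt_two (by exact_mod_cast h2)
    linarith
  rw [key a ha, key b hb]
  have hb2 : (0:ℝ) < ∏ p ∈ b.primeFactors, (1 - (p : ℝ)⁻¹) :=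
    Finset.prod_pos (hpos b)
  have hle : (∏ p ∈ b.primeFactors, (1 - (p : ℝ)⁻¹)) ≤
      ∏ p ∈ a.primeFactors, (1 - (p : ℝ)⁻¹) := by
    rw [← Finset.prod_sdiff hsub]
    have hone : (∏ p ∈ b.primeFactors \ a.primeFactors, (1 - (p : ℝ)⁻¹)) ≤ 1 := by
      apply Finset.prod_le_one
      · intro i hi; exact (hpos b i (Finset.mem_sdiff.mp hi).1).le
      · intro i hi
        have : (0:ℝ) ≤ (i:ℝ)⁻¹ := by positivity
        linarith
    have ha2 : (0:ℝ) ≤ ∏ p ∈ a.primeFactors, (1 - (p : ℝ)⁻¹) :=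
      (Finset.prod_pos (hpos a)).le
    calc (∏ p ∈ b.primeFactors \ a.primeFactors, (1 - (p : ℝ)⁻¹)) *
          ∏ p ∈ a.primeFactors, (1 - (p : ℝ)⁻¹)
        ≤ 1 * ∏ p ∈ a.primeFactors, (1 - (p : ℝ)⁻¹) :=
          mul_le_mul_of_nonneg_right hone ha2
      _ = _ := one_mul _
  exact inv_anti₀ hb2 hle

theorem superabundant_sigma_div_totient_mono
    (n n' : ℕ) (hn : Superabundant n) (hn' : Superabundant n') (hlt : n < n')
    (h1 : 1 < n)
    (p p' : ℕ) (hp : p.Prime) (hpn : p ∣ n)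
    (hmax : ∀ q : ℕ, q.Prime → q ∣ n → q ≤ p)
    (hp' : p'.Prime) (hpn' : p' ∣ n')
    (hmax' : ∀ q : ℕ, q.Prime → q ∣ n' → q ≤ p')
    (hpp : p ≤ p')
    (hdvd : ∀ q : ℕ, q.Prime → q ∣ n → q ∣ n') :
    (sigma1 n : ℝ) / n.totient < (sigma1 n' : ℝ) / n'.totient := by
  have h0 : 0 < n := hn.1
  have h0' : 0 < n' := hn'.1
  have hsub : n.primeFactors ⊆ n'.primeFactors := by
    intro q hq
    rw [Nat.mem_primeFactors] at hq ⊢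
    exact ⟨hq.1, hdvd q hq.1 hq.2.1, h0'.ne'⟩
  have hratio : (sigma1 n : ℝ) / n < (sigma1 n' : ℝ) / n' := hn'.2 n h0 hlt
  have htot : (n : ℝ) / n.totient ≤ (n' : ℝ) / n'.totient :=
    totient_ratio_mono h0 h0' hsub
  have hφ : 0 < n.totient := Nat.totient_pos.mpr h0
  have hφ' : 0 < n'.totient := Nat.totient_pos.mpr h0'
  have hσ : 0 < sigma1 n := by
    have : n ∈ n.divisors := Nat.mem_divisors_self n h0.ne'
    exact lt_of_lt_of_le h0 (Finset.single_le_sum (f := id) (fun i _ => Nat.zero_le i) this)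
  have e1 : (sigma1 n : ℝ) / n.totient = ((sigma1 n : ℝ) / n) * ((n:ℝ) / n.totient) := by
    field_simp
  have e2 : (sigma1 n' : ℝ) / n'.totient = ((sigma1 n' : ℝ) / n') * ((n':ℝ) / n'.totient) := by
    field_simp
  rw [e1, e2]
  have hpos1 : (0:ℝ) < (n:ℝ) / n.totient := by positivity
  have hpos2 : (0:ℝ) ≤ (sigma1 n' : ℝ) / n' := by positivity
  exact mul_lt_mul hratio htot hpos1 hpos2
end
end

section
/- For all real c > 1 and x > e, the inequality (1/(c−1))·(c·(log log(c x))/(log log x) − 1) < 1 + (c/(c−1))·(log c)/(log x · log log x) holds. -/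
open Real Finset

noncomputable section

/-!
With `L = log x` we have `log log (c x) = log (L + log c) < log L + log c / L`, the tangent-line
bound for the strictly concave `log` at `L`. Substituting this bound on the left, the
resulting expression simplifies exactly to the right-hand side.
-/

theorem Real.log_add_lt_log_add_div {L t : ℝ} (hL : 0 < L) (hLt : 0 < L + t) (ht : t ≠ 0) :
    Real.log (L + t) < Real.log L + t / L := by
  have hratio : Real.log ((L + t) / L) < (L + t) / L - 1 :=
    Real.log_lt_sub_one_of_pos (by positivity) (by rwa [Ne, div_eq_one_iff_eq hL.ne', add_eq_left])
  rw [Real.log_div hLt.ne' hL.ne'] at hratio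
  have : (L + t) / L - 1 = t / L := by field_simp; ring
  linarith

theorem loglog_cx_inequality (c x : ℝ) (hc : 1 < c) (hx : Real.exp 1 < x) :
    (1 / (c - 1)) * (c * Real.log (Real.log (c * x)) / Real.log (Real.log x) - 1) <
      1 + (c / (c - 1)) * Real.log c / (Real.log x * Real.log (Real.log x)) := by
  have hx0 : 0 < x := (Real.exp_pos 1).trans hx
  have hL : 1 < Real.log x := (Real.lt_log_iff_exp_lt hx0).2 hx
  have hLL : 0 < Real.log (Real.log x) := Real.log_pos hL
  have hc1 : 0 < c - 1 := sub_pos.2 hc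
  have ht : 0 < Real.log c := Real.log_pos hc
  have hlog_cx : Real.log (c * x) = Real.log x + Real.log c :=
    (Real.log_mul (by positivity) hx0.ne').trans (add_comm _ _)
  calc (1 / (c - 1)) * (c * Real.log (Real.log (c * x)) / Real.log (Real.log x) - 1)
      < (1 / (c - 1)) *
          (c * (Real.log (Real.log x) + Real.log c / Real.log x) / Real.log (Real.log x) - 1) := by
        rw [hlog_cx]
        gcongr
        exact Real.log_add_lt_log_add_div (by linarith) (by linarith) ht.ne'
    _ = 1 + (c / (c - 1)) * Real.log c / (Real.log x * Real.log (Real.log x)) := by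
        field_simp
        ring
end
end
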